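/- Let (a_n)_{n=0}^∞ be a Leja sequence on the unit circle S¹. Then for every integer N ≥ 2, E_0(α_N) = −2 log 2 · Σ_{k=1}^{N−1} τ(k). -/

import Mathlib

open Filter Topology

/-- Logarithmic energy of the first `N` points of the sequence `a`. -/
noncomputable def logEnergy (a : ℕ → ℂ) (N : ℕ) : ℝ :=
  ∑ i ∈ Finset.range N, ∑ j ∈ Finset.range N,
    if i ≠ j then Real.log (1 / ‖a i - a j‖) else 0

/-- `a` is a Leja sequence on the unit circle: all points lie on the circle and
`a (n+1)` maximizes `∏_{i=0}^{n} |z - a i|` over the circle. -/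
def IsLejaSeq (a : ℕ → ℂ) : Prop :=
  (∀ n, ‖a n‖ = 1) ∧
  ∀ n : ℕ, ∀ z : ℂ, ‖z‖ = 1 →
    ∏ i ∈ Finset.range (n + 1), ‖z - a i‖ ≤
      ∏ i ∈ Finset.range (n + 1), ‖a (n + 1) - a i‖

/-- τ(k): the number of ones in the binary representation of k. -/
def tau (k : ℕ) : ℕ := (Nat.digits 2 k).sum

open Finset

/-!
The first `2k` points of a Leja sequence on the circle come in antipodal pairs
`a (2j+1) = -a (2j)`, so `∏_{i<2k} |z - a i| = ∏_{j<k} |z² - a (2j)²|` and the squares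
`a (2j)²` form again a Leja sequence. Halving `n` along its binary expansion then gives
`∏_{i<n} |a n - a i| = 2 ^ τ(n)`: an even index passes to the squared sequence, and an odd index
`2k+1` sees the same product as `2k` times the antipodal factor `2`. Finally
`E₀(α_N) = -2 ∑_{n<N} log ∏_{i<n} |a n - a i|`.
-/

lemma Complex.exists_norm_eq_one_notMem (s : Finset ℂ) : ∃ z : ℂ, ‖z‖ = 1 ∧ z ∉ s := by
  have hsphere : (Metric.sphere (0 : ℂ) 1).Infinite := by
    refine (isPreconnected_sphere ?_ 0 1).infinite_of_nontrivial ⟨1, ?_, -1, ?_, by norm_num⟩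
    · rw [Complex.rank_real_complex]; norm_num
    · simp
    · simp
  obtain ⟨z, hz, hzs⟩ := hsphere.exists_notMem_finset s
  exact ⟨z, by simpa using hz, hzs⟩

lemma Complex.exists_norm_eq_one_sq_eq {u : ℂ} (hu : ‖u‖ = 1) : ∃ z : ℂ, ‖z‖ = 1 ∧ z ^ 2 = u := by
  obtain ⟨z, hz⟩ := IsAlgClosed.exists_pow_nat_eq u two_pos
  refine ⟨z, ?_, hz⟩
  rw [← pow_left_inj₀ (norm_nonneg z) zero_le_one two_ne_zero, ← norm_pow, hz, hu, one_pow]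

lemma Complex.norm_neg_sub_self (x : ℂ) : ‖-x - x‖ = 2 * ‖x‖ := by
  rw [← neg_add', norm_neg, ← two_mul, norm_mul, Complex.norm_two]

lemma prod_norm_sub_range_two_mul (a : ℕ → ℂ) {k : ℕ}
    (hpair : ∀ j < k, a (2 * j + 1) = -a (2 * j)) (z : ℂ) :
    ∏ i ∈ range (2 * k), ‖z - a i‖ = ∏ j ∈ range k, ‖z ^ 2 - a (2 * j) ^ 2‖ := by
  induction k with
  | zero => simp
  | succ k ih =>
    rw [Nat.mul_succ, prod_range_succ, prod_range_succ, prod_range_succ,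
      ih fun j hj => hpair j (by omega), hpair k (by omega), mul_assoc, ← norm_mul]
    congr 2
    ring

lemma prod_norm_neg_sub_range_two_mul (a : ℕ → ℂ) {k : ℕ}
    (hpair : ∀ j < k, a (2 * j + 1) = -a (2 * j)) (z : ℂ) :
    ∏ i ∈ range (2 * k), ‖-z - a i‖ = ∏ i ∈ range (2 * k), ‖z - a i‖ := by
  simp only [prod_norm_sub_range_two_mul a hpair, neg_sq]

lemma tau_two_mul (k : ℕ) : tau (2 * k) = tau k := by
  rcases Nat.eq_zero_or_pos k with rfl | hk
  · rfl
  · rw [tau, Nat.digits_def' one_lt_two (by omega), tau]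
    simp

lemma tau_two_mul_add_one (k : ℕ) : tau (2 * k + 1) = tau k + 1 := by
  have hdiv : (2 * k + 1) / 2 = k := by omega
  rw [tau, Nat.digits_def' one_lt_two (by omega), tau, hdiv]
  simp [add_comm]

lemma logEnergy_succ (a : ℕ → ℂ) (N : ℕ) :
    logEnergy a (N + 1) = logEnergy a N - 2 * ∑ i ∈ range N, Real.log ‖a N - a i‖ := by
  have hcol : ∀ i ∈ range N,
      (if i ≠ N then Real.log (1 / ‖a i - a N‖) else 0) = -Real.log ‖a N - a i‖ := by
    intro i hi
    rw [if_pos (mem_range.mp hi).ne, norm_sub_rev, one_div, Real.log_inv]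
  have hrow : ∀ j ∈ range N,
      (if N ≠ j then Real.log (1 / ‖a N - a j‖) else 0) = -Real.log ‖a N - a j‖ := by
    intro j hj
    rw [if_pos (mem_range.mp hj).ne', one_div, Real.log_inv]
  simp only [logEnergy, sum_range_succ, sum_add_distrib, sum_congr rfl hcol, sum_congr rfl hrow,
    sum_neg_distrib, ne_eq, not_true_eq_false, if_false]
  ring

namespace IsLejaSeq

variable {a : ℕ → ℂ}

theorem prod_norm_sub_le (ha : IsLejaSeq a) (n : ℕ) {z : ℂ} (hz : ‖z‖ = 1) :
    ∏ i ∈ range n, ‖z - a i‖ ≤ ∏ i ∈ range n, ‖a n - a i‖ := by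
  cases n with
  | zero => simp
  | succ n => exact ha.2 n z hz

theorem prod_norm_sub_pos (ha : IsLejaSeq a) (n : ℕ) : 0 < ∏ i ∈ range n, ‖a n - a i‖ := by
  obtain ⟨z, hz, hzs⟩ := Complex.exists_norm_eq_one_notMem ((range n).image a)
  refine lt_of_lt_of_le (prod_pos fun i hi => norm_pos_iff.mpr (sub_ne_zero.mpr ?_))
    (ha.prod_norm_sub_le n hz)
  rintro rfl
  exact hzs (mem_image_of_mem a hi)

/-- After the antipodal pairs `a 0, a 1, …, a (2k-1)`, the product `∏_{i<2k} ‖z - a i‖` is even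
in `z`, so at `z = -a (2k)` it reaches its maximum times the largest possible last factor `2`. -/
theorem odd_eq_neg_even (ha : IsLejaSeq a) (k : ℕ) : a (2 * k + 1) = -a (2 * k) := by
  induction k using Nat.strong_induction_on with
  | _ k ih =>
  set M := ∏ i ∈ range (2 * k), ‖a (2 * k) - a i‖
  set d := ‖a (2 * k) - a (2 * k + 1)‖
  have hM : 0 < M := ha.prod_norm_sub_pos (2 * k)
  have hnext : ∏ i ∈ range (2 * k), ‖a (2 * k + 1) - a i‖ ≤ M :=
    ha.prod_norm_sub_le (2 * k) (ha.1 _)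
  have hlow : 2 * M ≤ M * d := calc
    2 * M = ∏ i ∈ range (2 * k + 1), ‖-a (2 * k) - a i‖ := by
      rw [prod_range_succ, prod_norm_neg_sub_range_two_mul a ih, Complex.norm_neg_sub_self, ha.1,
        mul_one, mul_comm]
    _ ≤ ∏ i ∈ range (2 * k + 1), ‖a (2 * k + 1) - a i‖ :=
      ha.prod_norm_sub_le (2 * k + 1) (by rw [norm_neg, ha.1])
    _ ≤ M * d := by
      rw [prod_range_succ, norm_sub_rev]
      exact mul_le_mul_of_nonneg_right hnext (norm_nonneg _)
  have hd : d ≤ 2 := (norm_sub_le _ _).trans_eq (by rw [ha.1, ha.1]; norm_num)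
  have htriangle : ‖a (2 * k) + -a (2 * k + 1)‖ = ‖a (2 * k)‖ + ‖-a (2 * k + 1)‖ := by
    rw [← sub_eq_add_neg, norm_neg, ha.1, ha.1]
    nlinarith
  rw [eq_of_norm_eq_of_norm_add_eq (by rw [norm_neg, ha.1, ha.1]) htriangle, neg_neg]

theorem even_sq (ha : IsLejaSeq a) : IsLejaSeq fun k => a (2 * k) ^ 2 := by
  have hpair : ∀ k, ∀ j < k, a (2 * j + 1) = -a (2 * j) := fun _ j _ => ha.odd_eq_neg_even j
  refine ⟨fun n => by rw [norm_pow, ha.1, one_pow], fun k u hu => ?_⟩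
  obtain ⟨z, hz, rfl⟩ := Complex.exists_norm_eq_one_sq_eq hu
  simp only [← prod_norm_sub_range_two_mul a (hpair (k + 1))]
  exact ha.prod_norm_sub_le (2 * (k + 1)) hz

theorem prod_norm_sub_eq_two_pow_tau (ha : IsLejaSeq a) (n : ℕ) :
    ∏ i ∈ range n, ‖a n - a i‖ = 2 ^ tau n := by
  induction n using Nat.strong_induction_on generalizing a with
  | _ n ih =>
  obtain ⟨k, rfl | rfl⟩ := Nat.even_or_odd' n
  · rcases Nat.eq_zero_or_pos k with rfl | hk
    · simp [tau]
    rw [prod_norm_sub_range_two_mul a fun j _ => ha.odd_eq_neg_even j,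
      ih k (by omega) ha.even_sq, tau_two_mul]
  · rw [prod_range_succ, ha.odd_eq_neg_even, prod_norm_neg_sub_range_two_mul a
      fun j _ => ha.odd_eq_neg_even j, ih (2 * k) (by omega) ha, Complex.norm_neg_sub_self, ha.1,
      tau_two_mul, tau_two_mul_add_one, pow_succ, mul_one]

theorem sum_log_norm_sub (ha : IsLejaSeq a) (n : ℕ) :
    ∑ i ∈ range n, Real.log ‖a n - a i‖ = tau n * Real.log 2 := by
  have hprod := ha.prod_norm_sub_eq_two_pow_tau n
  have hne : ∀ i ∈ range n, ‖a n - a i‖ ≠ 0 :=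
    prod_ne_zero_iff.mp (by rw [hprod]; positivity)
  rw [← Real.log_prod hne, hprod, Real.log_pow]

theorem logEnergy_eq (ha : IsLejaSeq a) (N : ℕ) :
    logEnergy a N = -2 * Real.log 2 * ∑ k ∈ range N, (tau k : ℝ) := by
  induction N with
  | zero => simp [logEnergy]
  | succ N ih => rw [logEnergy_succ, ih, ha.sum_log_norm_sub, sum_range_succ]; ring

end IsLejaSeq

theorem leja_logEnergy_binary_general (a : ℕ → ℂ) (ha : IsLejaSeq a) (N : ℕ) :
    logEnergy a N = -2 * Real.log 2 * ∑ k ∈ Finset.Icc 1 (N - 1), (tau k : ℝ) := by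
  rw [ha.logEnergy_eq]
  congr 1
  refine (sum_subset (fun k hk => by simp only [mem_Icc, mem_range] at hk ⊢; omega) ?_).symm
  intro k hk hk'
  obtain rfl : k = 0 := by simp only [mem_Icc, mem_range] at hk hk'; omega
  simp [tau]

theorem leja_logEnergy_binary (a : ℕ → ℂ) (ha : IsLejaSeq a) (N : ℕ) (hN : 2 ≤ N) :
    logEnergy a N = -2 * Real.log 2 * ∑ k ∈ Finset.Icc 1 (N - 1), (tau k : ℝ) :=
  leja_logEnergy_binary_general a ha N
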